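/- Let A be an associative algebra with involution over a field of characteristic 0, with the Hochschild boundary b_k = Σ_{i=0}^k (−1)^i d_i on C_k(A) = A^{⊗(k+1)}, and let y_k = (−1)^{k(k+1)/2} ω_k. Then the boundary on the quotient C(A)/(1−t) induces well-defined boundaries on both C(A)/(1−t, 1−y) and C(A)/(1−t, 1+y). -/
import Mathlib


/-!
STATEMENT 6: Let `A` be an associative algebra with involution over a field of
characteristic 0, with Hochschild boundary `b = Σ (−1)^i d_i` on `C_k(A) = A^{⊗(k+1)}`,
cyclic operator `t_k = (−1)^k τ_k` and dihedral operator `y_k = (−1)^{k(k+1)/2} ω_k`.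
Then the boundary descends to `C(A)/(1−t)` and further induces well-defined boundaries on
both `C(A)/(1−t, 1−y)` and `C(A)/(1−t, 1+y)`; i.e. `b` maps the subspace
`im(1−t) (+ im(1∓y))` of `A^{⊗(k+2)}` into the corresponding subspace of `A^{⊗(k+1)}`.

All operators are characterized by their values on pure tensors.
-/

-- auxiliary definitions and lemmas


private lemma modh {a n : ℕ} (h1 : a < 2 * n) (h2 : n ≤ a) : a % n = a - n := by
  rw [Nat.mod_eq_sub_mod h2]; exact Nat.mod_eq_of_lt (by omega)

private lemma vne {n : ℕ} {m : Fin (n + 1)} (hm : m ≠ 0) : m.val ≠ 0 :=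
  fun h => hm (Fin.ext (by simp [h]))

private lemma fF1 (n : ℕ) : (-1 : Fin (n + 1)) = Fin.last n := by
  ext; simp only [Fin.neg_def, Fin.val_one', Fin.val_last]
  rcases n with _ | n
  · simp
  · rw [Nat.one_mod, Nat.mod_eq_of_lt (by omega)]; omega

private lemma fF2 (n : ℕ) (m : Fin (n + 1)) : (m.succ : Fin (n + 2)) - 1 = m.castSucc := by
  have hm := m.isLt
  ext
  simp only [Fin.sub_def, Fin.val_succ, Fin.val_one, Fin.coe_castSucc]
  rw [modh (by omega) (by omega)]; omega

private lemma fF3 (n : ℕ) (m : Fin (n + 1)) (hm : m ≠ 0) :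
    (m.castSucc : Fin (n + 2)) - 1 = (m - 1).castSucc := by
  have hm1 := m.isLt
  have hm0 := vne hm
  ext
  simp only [Fin.sub_def, Fin.val_one, Fin.coe_castSucc, Fin.val_one']
  rcases n with _ | n
  · omega
  · rw [Nat.one_mod, modh (by omega) (by omega), modh (by omega) (by omega)]; omega

private lemma fF4 (n : ℕ) : (Fin.last (n + 1) : Fin (n + 2)) - 1 = (Fin.last n).castSucc := by
  ext
  simp only [Fin.sub_def, Fin.val_one, Fin.val_last, Fin.coe_castSucc]
  rw [modh (by omega) (by omega)]; omega

private lemma fF6 (n : ℕ) (m : Fin (n + 1)) (hm : m ≠ 0) :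
    (-(m.succ) : Fin (n + 2)) = ((-m : Fin (n + 1))).castSucc := by
  have hm1 := m.isLt
  have hm0 := vne hm
  ext
  simp only [Fin.neg_def, Fin.val_succ, Fin.coe_castSucc]
  rw [Nat.mod_eq_of_lt (by omega), Nat.mod_eq_of_lt (by omega)]; omega

private lemma fF7 (n : ℕ) (m : Fin (n + 1)) (hm : m ≠ 0) :
    (-(m.castSucc) : Fin (n + 2)) = ((-m : Fin (n + 1))).succ := by
  have hm1 := m.isLt
  have hm0 := vne hm
  ext
  simp only [Fin.neg_def, Fin.coe_castSucc, Fin.val_succ]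
  rw [Nat.mod_eq_of_lt (by omega), Nat.mod_eq_of_lt (by omega)]; omega

private lemma fF8 (n : ℕ) (m : Fin (n + 1)) (hm : m ≠ 0) :
    ((m - 1 : Fin (n + 1)).succ : Fin (n + 2)) = m.castSucc := by
  have hm1 := m.isLt
  have hm0 := vne hm
  ext
  simp only [Fin.sub_def, Fin.val_succ, Fin.val_one', Fin.coe_castSucc]
  rcases n with _ | n
  · omega
  · rw [Nat.one_mod, modh (by omega) (by omega)]; omega

private lemma fF9 (n : ℕ) (m : Fin (n + 1)) (hm : m ≠ 0) : (-m : Fin (n + 1)) ≠ 0 := by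
  have hm1 := m.isLt
  have hm0 := vne hm
  intro h
  have := congrArg Fin.val h
  simp only [Fin.neg_def, Fin.val_zero] at this
  rw [Nat.mod_eq_of_lt (by omega)] at this
  omega

private lemma fF10 (n : ℕ) : (-(Fin.last (n + 1)) : Fin (n + 2)) = 1 := by
  ext
  simp only [Fin.neg_def, Fin.val_last, Fin.val_one]
  rw [Nat.mod_eq_of_lt (by omega)]; omega

-- value of negation
private lemma fVneg (n : ℕ) (m : Fin (n + 1)) (hm : m ≠ 0) : (-m : Fin (n + 1)).val = n + 1 - m.val := by
  have hm1 := m.isLt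
  have hm0 := vne hm
  simp only [Fin.neg_def]
  rw [Nat.mod_eq_of_lt (by omega)]

private lemma fVsub1 (n : ℕ) (m : Fin (n + 1)) (hm : m ≠ 0) : (m - 1 : Fin (n + 1)).val = m.val - 1 := by
  have hm1 := m.isLt
  have hm0 := vne hm
  simp only [Fin.sub_def, Fin.val_one']
  rcases n with _ | n
  · omega
  · rw [Nat.one_mod, modh (by omega) (by omega)]; omega

section Faces
variable {A : Type*} [Ring A]

private def face {k : ℕ} (i : Fin (k + 1)) (v : Fin (k + 2) → A) : Fin (k + 1) → A := fun m =>
  if m < i then v m.castSucc else if m = i then v m.castSucc * v m.succ else v m.succ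

private def lface {k : ℕ} (v : Fin (k + 2) → A) : Fin (k + 1) → A := fun m =>
  if m = 0 then v (Fin.last (k + 1)) * v 0 else v m.castSucc

-- L2 : d_0 τ = d_n
private lemma faceL2 {k : ℕ} (v : Fin (k + 2) → A) :
    face 0 (fun p => v (p - 1)) = lface v := by
  funext m
  simp only [face, lface]
  by_cases hm : m = 0
  · subst hm
    simp only [Fin.not_lt_zero, if_false, if_true, if_pos rfl, Fin.castSucc_zero, Fin.succ_zero_eq_one]
    rw [zero_sub, fF1, show ((1 : Fin (k + 2)) - 1) = 0 from sub_self 1]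
  · rw [if_neg (Fin.not_lt_zero m), if_neg hm, fF2, if_neg hm]

-- L1 : d_i τ = τ d_{i-1}, 1 ≤ i ≤ k
private lemma faceL1 {k : ℕ} (j : Fin k) (v : Fin (k + 2) → A) :
    face (j.succ) (fun p => v (p - 1)) = fun m => face j.castSucc v (m - 1) := by
  funext m
  simp only [face]
  by_cases hm : m = 0
  · subst hm
    rw [if_pos j.succ_pos, Fin.castSucc_zero, zero_sub, fF1, zero_sub, fF1,
      if_neg (not_lt.2 (Fin.le_last _)), if_neg (Fin.ne_last_of_lt (Fin.castSucc_lt_last j)).symm,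
      Fin.succ_last]
  · have hu : (m - 1 : Fin (k + 1)).val = m.val - 1 := fVsub1 _ m hm
    have hm0 := vne hm
    have hm1 := m.isLt
    have hc1 : (m < j.succ) ↔ ((m - 1) < j.castSucc) := by
      rw [Fin.lt_def, Fin.lt_def, hu, Fin.val_succ, Fin.coe_castSucc]; omega
    have hc2 : (m = j.succ) ↔ ((m - 1) = j.castSucc) := by
      rw [Fin.ext_iff, Fin.ext_iff, hu, Fin.val_succ, Fin.coe_castSucc]; omega
    by_cases h1 : m < j.succ
    · rw [if_pos h1, if_pos (hc1.mp h1), fF3 _ m hm]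
    · by_cases h2 : m = j.succ
      · rw [if_neg h1, if_pos h2, if_neg (fun h => h1 (hc1.mpr h)), if_pos (hc2.mp h2),
          fF3 _ m hm, fF2, fF8 _ m hm]
      · rw [if_neg h1, if_neg h2, if_neg (fun h => h1 (hc1.mpr h)),
          if_neg (fun h => h2 (hc2.mpr h)), fF2, fF8 _ m hm]

-- L3 : d_n τ = τ d_{n-1}
private lemma faceL3 {k : ℕ} (v : Fin (k + 2) → A) :
    lface (fun p => v (p - 1)) = fun m => face (Fin.last k) v (m - 1) := by
  funext m
  simp only [face, lface]
  by_cases hm : m = 0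
  · subst hm
    rw [if_pos rfl, fF4, zero_sub, fF1, zero_sub, fF1, if_neg (lt_irrefl _), if_pos rfl, Fin.succ_last]
  · have hu : (m - 1 : Fin (k + 1)).val = m.val - 1 := fVsub1 _ m hm
    have hm0 := vne hm
    have hm1 := m.isLt
    have hlt : (m - 1) < Fin.last k := by rw [Fin.lt_def, hu, Fin.val_last]; omega
    rw [if_neg hm, if_pos hlt, fF3 _ m hm]

variable (f : A → A)

-- L4 : d_0 ω = ω d_n
private lemma faceL4 {k : ℕ} (hf : ∀ a b, f (a * b) = f b * f a) (v : Fin (k + 2) → A) :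
    face 0 (fun p => f (v (-p))) = fun m => f (lface v (-m)) := by
  funext m
  simp only [face, lface]
  by_cases hm : m = 0
  · subst hm
    rw [if_neg (Fin.not_lt_zero _), if_pos rfl, Fin.castSucc_zero, neg_zero, Fin.succ_zero_eq_one,
      fF1, neg_zero, if_pos rfl, hf]
  · rw [if_neg (Fin.not_lt_zero _), if_neg hm, fF6 _ m hm, if_neg (fF9 _ m hm)]

-- L6 : d_n ω = ω d_0
private lemma faceL6 {k : ℕ} (hf : ∀ a b, f (a * b) = f b * f a) (v : Fin (k + 2) → A) :
    lface (fun p => f (v (-p))) = fun m => f (face 0 v (-m)) := by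
  funext m
  simp only [face, lface]
  by_cases hm : m = 0
  · subst hm
    rw [if_pos rfl, fF10, neg_zero, neg_zero, if_neg (Fin.not_lt_zero _), if_pos rfl,
      Fin.castSucc_zero, Fin.succ_zero_eq_one, hf]
  · rw [if_neg hm, fF7 _ m hm, if_neg (Fin.not_lt_zero _), if_neg (fF9 _ m hm)]

-- L5 : d_i ω = ω d_{n-i}, 1 ≤ i ≤ k
private lemma faceL5 {k : ℕ} (hf : ∀ a b, f (a * b) = f b * f a) (j : Fin k) (v : Fin (k + 2) → A) :
    face j.succ (fun p => f (v (-p))) = fun m => f (face ((j.rev).succ) v (-m)) := by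
  funext m
  simp only [face]
  by_cases hm : m = 0
  · subst hm
    rw [if_pos j.succ_pos, neg_zero, if_pos (j.rev).succ_pos, Fin.castSucc_zero, neg_zero]
  · have hm0 := vne hm
    have hm1 := m.isLt
    have hj := j.isLt
    have hu : (-m : Fin (k + 1)).val = k + 1 - m.val := fVneg _ m hm
    have hrev : ((j.rev).succ : Fin (k + 1)).val = k - j.val := by
      rw [Fin.val_succ, Fin.val_rev]; omega
    have hc1 : (m < j.succ) ↔ ((j.rev).succ < (-m : Fin (k + 1))) := by
      rw [Fin.lt_def, Fin.lt_def, hu, hrev, Fin.val_succ]; omega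
    have hc2 : (m = j.succ) ↔ ((-m : Fin (k + 1)) = (j.rev).succ) := by
      rw [Fin.ext_iff, Fin.ext_iff, hu, hrev, Fin.val_succ]; omega
    by_cases h1 : m < j.succ
    · rw [if_pos h1, if_neg (not_lt.2 (le_of_lt (hc1.mp h1))),
        if_neg (fun h => (lt_irrefl _ (h ▸ hc1.mp h1))), fF7 _ m hm]
    · by_cases h2 : m = j.succ
      · rw [if_neg h1, if_pos h2, if_neg (by rw [hc2.mp h2]; exact lt_irrefl _), if_pos (hc2.mp h2), fF7 _ m hm, fF6 _ m hm, hf]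
      · have h3 : (-m : Fin (k + 1)) < (j.rev).succ := by
          rw [Fin.lt_def, hu, hrev]
          rw [Fin.lt_def, Fin.val_succ] at h1
          rw [Fin.ext_iff, Fin.val_succ] at h2
          omega
        rw [if_neg h1, if_neg h2, if_pos h3, fF6 _ m hm]

end Faces

private lemma sgn {R : Type*} [Monoid R] [HasDistribNeg R] (a b : ℕ) (h : a % 2 = b % 2) :
    (-1 : R) ^ a = (-1 : R) ^ b := by
  have key : ∀ n : ℕ, (-1 : R) ^ n = if n % 2 = 0 then 1 else -1 := by
    intro n
    rcases Nat.even_or_odd n with h' | h'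
    · rw [h'.neg_one_pow, if_pos (Nat.even_iff.mp h')]
    · rw [h'.neg_one_pow, if_neg (by simp [Nat.odd_iff.mp h'])]
  rw [key a, key b, h]


open scoped TensorProduct

theorem hochschild_boundary_descends_to_dihedral_quotients
    (𝕜 : Type*) [Field 𝕜] [CharZero 𝕜]
    (A : Type*) [Ring A] [Algebra 𝕜 A]
    (ι : A →ₗ[𝕜] A) (hι2 : ∀ a, ι (ι a) = a) (hιmul : ∀ a b, ι (a * b) = ι b * ι a)
    (k : ℕ)
    -- the Hochschild boundary b_{k+1} : C_{k+1}(A) → C_k(A)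
    (b : (⨂[𝕜] _ : Fin (k + 2), A) →ₗ[𝕜] (⨂[𝕜] _ : Fin (k + 1), A))
    (hb : ∀ v : Fin (k + 2) → A,
      b (PiTensorProduct.tprod 𝕜 v) =
        (∑ i : Fin (k + 1), ((-1 : 𝕜) ^ (i : ℕ)) •
          PiTensorProduct.tprod 𝕜 (fun m : Fin (k + 1) =>
            if m < i then v m.castSucc
            else if m = i then v m.castSucc * v m.succ
            else v m.succ)) +
        ((-1 : 𝕜) ^ (k + 1)) •
          PiTensorProduct.tprod 𝕜 (fun m : Fin (k + 1) =>
            if m = 0 then v (Fin.last (k + 1)) * v 0 else v m.castSucc))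
    -- the cyclic and dihedral operators on C_{k+1}(A) = A^{⊗(k+2)}
    (t₁ y₁ : (⨂[𝕜] _ : Fin (k + 2), A) →ₗ[𝕜] (⨂[𝕜] _ : Fin (k + 2), A))
    (ht₁ : ∀ v : Fin (k + 2) → A,
      t₁ (PiTensorProduct.tprod 𝕜 v) =
        ((-1 : 𝕜) ^ (k + 1)) • PiTensorProduct.tprod 𝕜 (fun i => v (i - 1)))
    (hy₁ : ∀ v : Fin (k + 2) → A,
      y₁ (PiTensorProduct.tprod 𝕜 v) =
        ((-1 : 𝕜) ^ ((k + 1) * (k + 2) / 2)) • PiTensorProduct.tprod 𝕜 (fun i => ι (v (-i))))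
    -- the cyclic and dihedral operators on C_k(A) = A^{⊗(k+1)}
    (t₀ y₀ : (⨂[𝕜] _ : Fin (k + 1), A) →ₗ[𝕜] (⨂[𝕜] _ : Fin (k + 1), A))
    (ht₀ : ∀ v : Fin (k + 1) → A,
      t₀ (PiTensorProduct.tprod 𝕜 v) =
        ((-1 : 𝕜) ^ k) • PiTensorProduct.tprod 𝕜 (fun i => v (i - 1)))
    (hy₀ : ∀ v : Fin (k + 1) → A,
      y₀ (PiTensorProduct.tprod 𝕜 v) =
        ((-1 : 𝕜) ^ (k * (k + 1) / 2)) • PiTensorProduct.tprod 𝕜 (fun i => ι (v (-i)))) :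
    -- b descends to the cyclic quotient C(A)/(1−t):
    Submodule.map b (LinearMap.range (LinearMap.id - t₁)) ≤
        LinearMap.range (LinearMap.id - t₀) ∧
    -- b induces a well-defined boundary on the dihedral quotient C(A)/(1−t, 1−y):
    Submodule.map b
        (LinearMap.range (LinearMap.id - t₁) ⊔ LinearMap.range (LinearMap.id - y₁)) ≤
      LinearMap.range (LinearMap.id - t₀) ⊔ LinearMap.range (LinearMap.id - y₀) ∧
    -- b induces a well-defined boundary on the skew dihedral quotient C(A)/(1−t, 1+y):
    Submodule.map b
        (LinearMap.range (LinearMap.id - t₁) ⊔ LinearMap.range (LinearMap.id + y₁)) ≤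
      LinearMap.range (LinearMap.id - t₀) ⊔ LinearMap.range (LinearMap.id + y₀) := by
  classical
  have hb' : ∀ v : Fin (k + 2) → A,
      b (PiTensorProduct.tprod 𝕜 v) =
        (∑ i : Fin (k + 1), ((-1 : 𝕜) ^ (i : ℕ)) •
          PiTensorProduct.tprod 𝕜 (face i v)) +
        ((-1 : 𝕜) ^ (k + 1)) • PiTensorProduct.tprod 𝕜 (lface v) := hb
  have hexp : (k + 1) * (k + 2) / 2 = k * (k + 1) / 2 + (k + 1) := by
    obtain ⟨c, hc⟩ := Nat.even_mul_succ_self k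
    have h : (k + 1) * (k + 2) = k * (k + 1) + 2 * (k + 1) := by ring
    rw [h, hc]
    omega
  -- the generic span argument
  have main : ∀ (g : (⨂[𝕜] _ : Fin (k + 2), A) →ₗ[𝕜] (⨂[𝕜] _ : Fin (k + 2), A))
      (Q : Submodule 𝕜 (⨂[𝕜] _ : Fin (k + 1), A)),
      (∀ v : Fin (k + 2) → A, b (g (PiTensorProduct.tprod 𝕜 v)) ∈ Q) →
      Submodule.map b (LinearMap.range g) ≤ Q := by
    intro g Q hg
    rw [LinearMap.range_eq_map, ← PiTensorProduct.span_tprod_eq_top, Submodule.map_span,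
      Submodule.map_span, Submodule.span_le]
    rintro x ⟨y, ⟨w, ⟨v, rfl⟩, rfl⟩, rfl⟩
    exact hg v
  -- Part 1 key computation : b (1 - t₁) = (1 - t₀) b'
  have key1 : ∀ v : Fin (k + 2) → A,
      b (PiTensorProduct.tprod 𝕜 v - t₁ (PiTensorProduct.tprod 𝕜 v)) =
        (∑ i : Fin (k + 1), ((-1 : 𝕜) ^ (i : ℕ)) • PiTensorProduct.tprod 𝕜 (face i v)) -
          t₀ (∑ i : Fin (k + 1), ((-1 : 𝕜) ^ (i : ℕ)) • PiTensorProduct.tprod 𝕜 (face i v)) := by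
    intro v
    rw [map_sub, ht₁, map_smul, hb', hb', faceL3]
    rw [Fin.sum_univ_succ (f := fun i : Fin (k + 1) => ((-1 : 𝕜) ^ (i : ℕ)) •
      PiTensorProduct.tprod 𝕜 (face i (fun p => v (p - 1))))]
    rw [faceL2]
    have hmid : (∑ j : Fin k, ((-1 : 𝕜) ^ ((j.succ : Fin (k + 1)) : ℕ)) •
        PiTensorProduct.tprod 𝕜 (face j.succ (fun p => v (p - 1)))) =
        ∑ j : Fin k, ((-1 : 𝕜) ^ ((j : ℕ) + 1)) •
        PiTensorProduct.tprod 𝕜 (fun m => face j.castSucc v (m - 1)) :=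
      Finset.sum_congr rfl fun j _ => by rw [faceL1, Fin.val_succ]
    rw [hmid]
    have hR : t₀ (∑ i : Fin (k + 1), ((-1 : 𝕜) ^ (i : ℕ)) •
        PiTensorProduct.tprod 𝕜 (face i v)) =
        ∑ i : Fin (k + 1), ((-1 : 𝕜) ^ ((i : ℕ) + k)) •
          PiTensorProduct.tprod 𝕜 (fun m => face i v (m - 1)) := by
      rw [map_sum]
      exact Finset.sum_congr rfl fun i _ => by rw [map_smul, ht₀, smul_smul, ← pow_add]
    rw [hR, Fin.sum_univ_castSucc (f := fun i : Fin (k + 1) => ((-1 : 𝕜) ^ ((i : ℕ) + k)) •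
      PiTensorProduct.tprod 𝕜 (fun m => face i v (m - 1)))]
    simp only [Fin.val_zero, pow_zero, one_smul, Fin.coe_castSucc, Fin.val_last]
    -- distribute the outer scalar on the left
    rw [smul_add, smul_add, smul_smul, ← pow_add, Finset.smul_sum]
    have hmid2 : (∑ j : Fin k, ((-1 : 𝕜) ^ (k + 1)) • (((-1 : 𝕜) ^ ((j : ℕ) + 1)) •
        PiTensorProduct.tprod 𝕜 (fun m => face j.castSucc v (m - 1)))) =
        ∑ j : Fin k, ((-1 : 𝕜) ^ ((j : ℕ) + k)) •
        PiTensorProduct.tprod 𝕜 (fun m => face j.castSucc v (m - 1)) :=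
      Finset.sum_congr rfl fun j _ => by
        rw [smul_smul, ← pow_add, sgn ((k + 1) + ((j : ℕ) + 1)) ((j : ℕ) + k) (by omega)]
    rw [hmid2, sgn ((k + 1) + (k + 1)) 0 (by omega), sgn (k + k) 0 (by omega), pow_zero,
      one_smul]
    abel
  -- Part 2/3 key computation : b y₁ = y₀ b
  have key2 : ∀ v : Fin (k + 2) → A,
      b (y₁ (PiTensorProduct.tprod 𝕜 v)) = y₀ (b (PiTensorProduct.tprod 𝕜 v)) := by
    intro v
    rw [hy₁, map_smul, hexp, hb', faceL6 _ hιmul]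
    rw [Fin.sum_univ_succ (f := fun i : Fin (k + 1) => ((-1 : 𝕜) ^ (i : ℕ)) •
      PiTensorProduct.tprod 𝕜 (face i (fun p => ι (v (-p)))))]
    rw [faceL4 _ hιmul]
    have hm1 : (∑ j : Fin k, ((-1 : 𝕜) ^ ((j.succ : Fin (k + 1)) : ℕ)) •
        PiTensorProduct.tprod 𝕜 (face j.succ (fun p => ι (v (-p))))) =
        ∑ j : Fin k, ((-1 : 𝕜) ^ ((j.rev : ℕ) + 1)) •
        PiTensorProduct.tprod 𝕜 (fun m => ι (face j.succ v (-m))) := by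
      calc (∑ j : Fin k, ((-1 : 𝕜) ^ ((j.succ : Fin (k + 1)) : ℕ)) •
          PiTensorProduct.tprod 𝕜 (face j.succ (fun p => ι (v (-p)))))
          = ∑ j : Fin k, ((-1 : 𝕜) ^ ((j : ℕ) + 1)) •
            PiTensorProduct.tprod 𝕜 (fun m => ι (face j.rev.succ v (-m))) :=
            Finset.sum_congr rfl fun j _ => by rw [faceL5 _ hιmul, Fin.val_succ]
        _ = ∑ j : Fin k, ((-1 : 𝕜) ^ ((j.rev : ℕ) + 1)) •
            PiTensorProduct.tprod 𝕜 (fun m => ι (face j.succ v (-m))) := by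
            refine (Fintype.sum_equiv Fin.revPerm _ _ fun j => ?_).symm
            simp [Fin.rev_rev]
    rw [hm1]
    -- distribute
    rw [smul_add, smul_add, smul_smul, ← pow_add, Finset.smul_sum]
    simp only [Fin.val_zero, pow_zero, one_smul]
    have hm2 : (∑ j : Fin k, ((-1 : 𝕜) ^ (k * (k + 1) / 2 + (k + 1))) •
        (((-1 : 𝕜) ^ ((j.rev : ℕ) + 1)) •
          PiTensorProduct.tprod 𝕜 (fun m => ι (face j.succ v (-m))))) =
        ∑ j : Fin k, ((-1 : 𝕜) ^ (k * (k + 1) / 2 + ((j : ℕ) + 1))) •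
          PiTensorProduct.tprod 𝕜 (fun m => ι (face j.succ v (-m))) := by
      refine Finset.sum_congr rfl fun j _ => ?_
      have hj := j.isLt
      have hrev : (j.rev : ℕ) = k - 1 - (j : ℕ) := by simp [Fin.rev]; omega
      rw [smul_smul, ← pow_add, hrev]
      obtain ⟨c, hc⟩ : ∃ c, k * (k + 1) / 2 = c := ⟨_, rfl⟩
      rw [hc, sgn (c + (k + 1) + (k - 1 - (j : ℕ) + 1)) (c + ((j : ℕ) + 1)) (by omega)]
    have h0 : ((-1 : 𝕜) ^ (k * (k + 1) / 2 + (k + 1) + 0)) =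
        (-1 : 𝕜) ^ (k * (k + 1) / 2 + (k + 1)) := by rw [Nat.add_zero]
    rw [hm2, h0, smul_smul, ← pow_add]
    have hA : ((-1 : 𝕜) ^ (k * (k + 1) / 2 + (k + 1) + (k + 1))) =
        (-1 : 𝕜) ^ (k * (k + 1) / 2) := by
      obtain ⟨c, hc⟩ : ∃ c, k * (k + 1) / 2 = c := ⟨_, rfl⟩
      rw [hc, sgn (c + (k + 1) + (k + 1)) c (by omega)]
    rw [hA]
    -- now the right-hand side
    rw [hb', map_add, map_smul, hy₀, smul_smul, ← pow_add]
    have hRsum : y₀ (∑ i : Fin (k + 1), ((-1 : 𝕜) ^ (i : ℕ)) •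
        PiTensorProduct.tprod 𝕜 (face i v)) =
        ∑ i : Fin (k + 1), ((-1 : 𝕜) ^ ((i : ℕ) + k * (k + 1) / 2)) •
          PiTensorProduct.tprod 𝕜 (fun m => ι (face i v (-m))) := by
      rw [map_sum]
      exact Finset.sum_congr rfl fun i _ => by rw [map_smul, hy₀, smul_smul, ← pow_add]
    rw [hRsum, Fin.sum_univ_succ (f := fun i : Fin (k + 1) =>
      ((-1 : 𝕜) ^ ((i : ℕ) + k * (k + 1) / 2)) •
      PiTensorProduct.tprod 𝕜 (fun m => ι (face i v (-m))))]
    simp only [Fin.val_zero, zero_add, Fin.val_succ]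
    have hRmid : (∑ j : Fin k, ((-1 : 𝕜) ^ (((j : ℕ) + 1) + k * (k + 1) / 2)) •
        PiTensorProduct.tprod 𝕜 (fun m => ι (face j.succ v (-m)))) =
        ∑ j : Fin k, ((-1 : 𝕜) ^ (k * (k + 1) / 2 + ((j : ℕ) + 1))) •
          PiTensorProduct.tprod 𝕜 (fun m => ι (face j.succ v (-m))) :=
      Finset.sum_congr rfl fun j _ => by rw [Nat.add_comm ((j : ℕ) + 1) (k * (k + 1) / 2)]
    rw [hRmid, Nat.add_comm (k + 1) (k * (k + 1) / 2)]
    abel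
  have memt : ∀ v : Fin (k + 2) → A,
      b ((LinearMap.id - t₁ : (⨂[𝕜] _ : Fin (k + 2), A) →ₗ[𝕜] ⨂[𝕜] _ : Fin (k + 2), A)
          (PiTensorProduct.tprod 𝕜 v)) ∈
        LinearMap.range (LinearMap.id - t₀ :
          (⨂[𝕜] _ : Fin (k + 1), A) →ₗ[𝕜] ⨂[𝕜] _ : Fin (k + 1), A) := by
    intro v
    rw [LinearMap.sub_apply, LinearMap.id_apply, key1 v]
    exact ⟨_, by rw [LinearMap.sub_apply, LinearMap.id_apply]⟩
  refine ⟨main _ _ memt, ?_, ?_⟩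
  · rw [Submodule.map_sup]
    refine sup_le (main _ _ fun v => Submodule.mem_sup_left (memt v)) (main _ _ fun v => ?_)
    refine Submodule.mem_sup_right (LinearMap.mem_range.2 ⟨b (PiTensorProduct.tprod 𝕜 v), ?_⟩)
    rw [LinearMap.sub_apply, LinearMap.id_apply, LinearMap.sub_apply, LinearMap.id_apply,
      map_sub, key2]
  · rw [Submodule.map_sup]
    refine sup_le (main _ _ fun v => Submodule.mem_sup_left (memt v)) (main _ _ fun v => ?_)
    refine Submodule.mem_sup_right (LinearMap.mem_range.2 ⟨b (PiTensorProduct.tprod 𝕜 v), ?_⟩)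
    rw [LinearMap.add_apply, LinearMap.id_apply, LinearMap.add_apply, LinearMap.id_apply,
      map_add, key2]
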